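/- Let p ≥ 2 be a real number. There exists a constant C > 0 (depending only on p) such that for all ξ, η ∈ Matrix (Fin 3) (Fin 3) ℝ, |G_p(ξ) − G_p(η)| ≤ C(1 + G_p(ξ) + G_p(η))^{(p−1)/p}‖ξ − η‖, where G_p(ξ) := max(μ₁^{p/2} + μ₂^{p/2} + μ₃^{p/2} − 3, 0) and μ₁, μ₂, μ₃ are the (real) eigenvalues of the symmetric positive semidefinite matrix C̃(ξ) := (I₃ + ξ)ᵀ(I₃ + ξ). -/

import Mathlib

open Matrix

/-- The Frobenius norm of a real matrix: `‖ξ‖ = (tr(ξᵀξ))^(1/2)`. -/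
noncomputable def frobNorm {M N : ℕ} (ξ : Matrix (Fin M) (Fin N) ℝ) : ℝ :=
  Real.sqrt ((ξᵀ * ξ).trace)

/-- The right Cauchy–Green tensor `C̃(ξ) = (I₃ + ξ)ᵀ(I₃ + ξ)`. -/
noncomputable def Ctil (ξ : Matrix (Fin 3) (Fin 3) ℝ) : Matrix (Fin 3) (Fin 3) ℝ :=
  (1 + ξ)ᵀ * (1 + ξ)

/-- `C̃(ξ)` is a symmetric (hermitian) real matrix. -/
lemma Ctil_isHermitian (ξ : Matrix (Fin 3) (Fin 3) ℝ) : (Ctil ξ).IsHermitian := by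
  have h := Matrix.isHermitian_conjTranspose_mul_self (1 + ξ)
  rwa [Matrix.conjTranspose_eq_transpose_of_trivial] at h

/-- The Ogden-type density `G_p(ξ) = max(μ₁^{p/2} + μ₂^{p/2} + μ₃^{p/2} − 3, 0)`,
where the `μᵢ` are the eigenvalues of `C̃(ξ)`. -/
noncomputable def Gp (p : ℝ) (ξ : Matrix (Fin 3) (Fin 3) ℝ) : ℝ :=
  max ((∑ i, (Ctil_isHermitian ξ).eigenvalues i ^ (p / 2)) - 3) 0

/-!
Put `q = p / 2` and `Φ(ξ) = ∑ μᵢ^q`, so that `G_p = max (Φ - 3) 0` and it suffices to bound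
`|Φ(ξ) - Φ(η)|`. If `U` and `V` are orthogonal eigenbases of `C̃(ξ)` and `C̃(η)`, the squared
entries of `UᵀV` form a doubly stochastic matrix `W` with
`∑ W_ij (μ_i - ν_j)² = ‖C̃(ξ) - C̃(η)‖²` (the identity behind the Hoffman–Wielandt inequality).
Writing `Φ(ξ) - Φ(η) = ∑ W_ij (μ_i^q - ν_j^q)`, the mean value theorem and Cauchy–Schwarz give
`|Φ(ξ) - Φ(η)| ≤ √3 q M^(q-1) ‖C̃(ξ) - C̃(η)‖` once all eigenvalues lie in `[0, M]`, while
`‖C̃(ξ) - C̃(η)‖ ≤ (‖I + ξ‖ + ‖I + η‖) ‖ξ - η‖` and `‖I + ξ‖² = ∑ μᵢ ≤ 3M`.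
Since `μᵢ^q ≤ G_p(ξ) + 3`, one can take `M = (3 (1 + G_p(ξ) + G_p(η)))^(1/q)`, and then
`M^(q - 1/2)` is exactly the power `(p - 1)/p` of `3 (1 + G_p(ξ) + G_p(η))`.
-/

attribute [local instance] Matrix.frobeniusSeminormedAddCommGroup

open Set

lemma Real.abs_rpow_sub_rpow_le_of_mem_Icc {q M x y : ℝ} (hq : 1 ≤ q) (hx : x ∈ Icc 0 M)
    (hy : y ∈ Icc 0 M) : |x ^ q - y ^ q| ≤ q * M ^ (q - 1) * |x - y| := by
  have hderiv (z : ℝ) : HasDerivWithinAt (· ^ q) (q * z ^ (q - 1)) (Icc 0 M) z :=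
    (Real.hasDerivAt_rpow_const (Or.inr hq)).hasDerivWithinAt
  have hbound : ∀ z ∈ Icc 0 M, ‖q * z ^ (q - 1)‖ ≤ q * M ^ (q - 1) := by
    rintro z ⟨hz0, hzM⟩
    rw [Real.norm_eq_abs, abs_of_nonneg (by positivity)]
    gcongr
  exact (convex_Icc 0 M).norm_image_sub_le_of_norm_hasDerivWithin_le (fun z _ => hderiv z)
    hbound hy hx

namespace Matrix

section Frobenius

variable {m n : Type*} [Fintype m] [Fintype n]

lemma frobenius_norm_sq_eq_sum (X : Matrix m n ℝ) : ‖X‖ ^ 2 = ∑ i, ∑ j, X i j ^ 2 := by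
  rw [frobenius_norm_def, ← Real.rpow_natCast, ← Real.rpow_mul (by positivity)]
  norm_num [Real.norm_eq_abs, sq_abs]

lemma frobenius_norm_sq_eq_trace (X : Matrix m n ℝ) : ‖X‖ ^ 2 = (Xᵀ * X).trace := by
  rw [frobenius_norm_sq_eq_sum, Finset.sum_comm]
  simp only [trace, diag, mul_apply, transpose_apply, sq]

lemma frobenius_norm_unitary_mul [DecidableEq m] {U : Matrix m m ℝ} (hU : U ∈ unitaryGroup m ℝ)
    (X : Matrix m n ℝ) : ‖U * X‖ = ‖X‖ := by
  have hUU : Uᵀ * U = 1 := by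
    simpa [star_eq_conjTranspose, conjTranspose_eq_transpose_of_trivial] using
      mem_unitaryGroup_iff'.mp hU
  rw [← sq_eq_sq₀ (norm_nonneg _) (norm_nonneg _), frobenius_norm_sq_eq_trace,
    frobenius_norm_sq_eq_trace, transpose_mul, Matrix.mul_assoc, ← Matrix.mul_assoc Uᵀ, hUU,
    Matrix.one_mul]

lemma frobenius_norm_mul_unitary [DecidableEq n] {V : Matrix n n ℝ} (hV : V ∈ unitaryGroup n ℝ)
    (X : Matrix m n ℝ) : ‖X * V‖ = ‖X‖ := by
  have hVt : Vᵀ ∈ unitaryGroup n ℝ := by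
    simpa [star_eq_conjTranspose, conjTranspose_eq_transpose_of_trivial] using
      Unitary.star_mem hV
  rw [← frobenius_norm_transpose, transpose_mul, frobenius_norm_unitary_mul hVt,
    frobenius_norm_transpose]

lemma frobenius_norm_transpose_mul_self_sub_le (F G : Matrix m n ℝ) :
    ‖Fᵀ * F - Gᵀ * G‖ ≤ (‖F‖ + ‖G‖) * ‖F - G‖ := by
  have hsplit : Fᵀ * F - Gᵀ * G = Fᵀ * (F - G) + (F - G)ᵀ * G := by
    rw [transpose_sub, Matrix.mul_sub, Matrix.sub_mul]
    abel
  calc ‖Fᵀ * F - Gᵀ * G‖ ≤ ‖Fᵀ‖ * ‖F - G‖ + ‖(F - G)ᵀ‖ * ‖G‖ := by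
        rw [hsplit]
        exact (norm_add_le _ _).trans
          (add_le_add (frobenius_norm_mul _ _) (frobenius_norm_mul _ _))
    _ = (‖F‖ + ‖G‖) * ‖F - G‖ := by
        rw [frobenius_norm_transpose, frobenius_norm_transpose]
        ring

end Frobenius

section DoublyStochastic

variable {n : Type*} [Fintype n] [DecidableEq n] {W : Matrix n n ℝ}

lemma map_sq_mem_doublyStochastic {P : Matrix n n ℝ} (hP : P ∈ unitaryGroup n ℝ) :
    P.map (· ^ 2) ∈ doublyStochastic ℝ n := by
  rw [mem_doublyStochastic_iff_sum]
  refine ⟨fun i j => sq_nonneg _, fun i => ?_, fun j => ?_⟩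
  · simpa [mul_apply, one_apply, sq] using congr_fun₂ (mem_unitaryGroup_iff.mp hP) i i
  · simpa [mul_apply, one_apply, sq] using congr_fun₂ (mem_unitaryGroup_iff'.mp hP) j j

lemma sum_sub_sum_eq_of_mem_doublyStochastic (hW : W ∈ doublyStochastic ℝ n) (a b : n → ℝ) :
    ∑ i, a i - ∑ j, b j = ∑ i, ∑ j, W i j * (a i - b j) := by
  simp_rw [mul_sub, Finset.sum_sub_distrib, ← Finset.sum_mul, sum_row_of_mem_doublyStochastic hW,
    Finset.sum_comm (γ := n) (f := fun i j => W i j * b j), ← Finset.sum_mul,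
    sum_col_of_mem_doublyStochastic hW, one_mul]

lemma sum_mul_abs_le_of_mem_doublyStochastic (hW : W ∈ doublyStochastic ℝ n) (d : n → n → ℝ) :
    ∑ i, ∑ j, W i j * |d i j| ≤ √(Fintype.card n) * √(∑ i, ∑ j, W i j * d i j ^ 2) := by
  have hW0 : ∀ i j, 0 ≤ W i j := fun i j => nonneg_of_mem_doublyStochastic hW
  have hsum : ∑ i, ∑ j, W i j = Fintype.card n := by
    simp [sum_row_of_mem_doublyStochastic hW]
  have hCS := Finset.sum_sq_le_sum_mul_sum_of_sq_le_mul (Finset.univ ×ˢ Finset.univ)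
    (r := fun x : n × n => W x.1 x.2 * |d x.1 x.2|) (f := fun x => W x.1 x.2)
    (g := fun x => W x.1 x.2 * d x.1 x.2 ^ 2) (fun x _ => hW0 _ _)
    (fun x _ => mul_nonneg (hW0 _ _) (sq_nonneg _))
    (fun x _ => le_of_eq (by rw [mul_pow, sq_abs]; ring))
  simp only [Finset.sum_product, hsum] at hCS
  rw [← Real.sqrt_mul (Nat.cast_nonneg _)]
  exact Real.le_sqrt_of_sq_le hCS

lemma abs_sum_sub_sum_le_of_mem_doublyStochastic (hW : W ∈ doublyStochastic ℝ n)
    {φ : ℝ → ℝ} {L : ℝ} (hL : 0 ≤ L) {x y : n → ℝ}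
    (hφ : ∀ i j, |φ (x i) - φ (y j)| ≤ L * |x i - y j|) :
    |∑ i, φ (x i) - ∑ j, φ (y j)| ≤
      L * √(Fintype.card n) * √(∑ i, ∑ j, W i j * (x i - y j) ^ 2) := by
  have hW0 : ∀ i j, 0 ≤ W i j := fun i j => nonneg_of_mem_doublyStochastic hW
  rw [sum_sub_sum_eq_of_mem_doublyStochastic hW, mul_assoc]
  calc |∑ i, ∑ j, W i j * (φ (x i) - φ (y j))|
      ≤ ∑ i, ∑ j, W i j * |φ (x i) - φ (y j)| := by
        refine (Finset.abs_sum_le_sum_abs _ _).trans (Finset.sum_le_sum fun i _ => ?_)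
        refine (Finset.abs_sum_le_sum_abs _ _).trans_eq (Finset.sum_congr rfl fun j _ => ?_)
        rw [abs_mul, abs_of_nonneg (hW0 i j)]
    _ ≤ L * ∑ i, ∑ j, W i j * |x i - y j| := by
        simp_rw [Finset.mul_sum, mul_left_comm L]
        gcongr with i _ j _
        · exact hW0 i j
        · exact hφ i j
    _ ≤ L * (√(Fintype.card n) * √(∑ i, ∑ j, W i j * (x i - y j) ^ 2)) := by
        gcongr
        exact sum_mul_abs_le_of_mem_doublyStochastic hW _

end DoublyStochastic

namespace IsHermitian

variable {n : Type*} [Fintype n] [DecidableEq n] {A B : Matrix n n ℝ}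

noncomputable def eigenvectorOverlap (hA : A.IsHermitian) (hB : B.IsHermitian) :
    unitaryGroup n ℝ :=
  star hA.eigenvectorUnitary * hB.eigenvectorUnitary

lemma eigenvectorUnitary_mul_diagonal_mul_star (hA : A.IsHermitian) :
    (hA.eigenvectorUnitary : Matrix n n ℝ) * diagonal hA.eigenvalues *
      star (hA.eigenvectorUnitary : Matrix n n ℝ) = A := by
  simpa [RCLike.ofReal_real_eq_id] using hA.spectral_theorem.symm

lemma star_eigenvectorUnitary_mul_sub_mul (hA : A.IsHermitian) (hB : B.IsHermitian) :
    star (hA.eigenvectorUnitary : Matrix n n ℝ) * (A - B) * hB.eigenvectorUnitary =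
      diagonal hA.eigenvalues * eigenvectorOverlap hA hB -
        eigenvectorOverlap hA hB * diagonal hB.eigenvalues := by
  calc _ = star (hA.eigenvectorUnitary : Matrix n n ℝ) *
        ((hA.eigenvectorUnitary : Matrix n n ℝ) * diagonal hA.eigenvalues *
          star (hA.eigenvectorUnitary : Matrix n n ℝ) -
        (hB.eigenvectorUnitary : Matrix n n ℝ) * diagonal hB.eigenvalues *
          star (hB.eigenvectorUnitary : Matrix n n ℝ)) * hB.eigenvectorUnitary := by
        rw [eigenvectorUnitary_mul_diagonal_mul_star, eigenvectorUnitary_mul_diagonal_mul_star]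
    _ = _ := by
        simp only [eigenvectorOverlap, Submonoid.coe_mul, Unitary.coe_star, Matrix.mul_sub, Matrix.sub_mul,
          Matrix.mul_assoc, Unitary.coe_star_mul_self, Matrix.mul_one]
        simp only [← Matrix.mul_assoc, Unitary.coe_star_mul_self, Matrix.one_mul]

lemma sum_eigenvectorOverlap_sq_mul_sub_sq (hA : A.IsHermitian) (hB : B.IsHermitian) :
    ∑ i, ∑ j, eigenvectorOverlap hA hB i j ^ 2 * (hA.eigenvalues i - hB.eigenvalues j) ^ 2 =
      ‖A - B‖ ^ 2 := by
  rw [← frobenius_norm_mul_unitary hB.eigenvectorUnitary.2,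
    ← frobenius_norm_unitary_mul (Unitary.star_mem hA.eigenvectorUnitary.2),
    ← Matrix.mul_assoc, star_eigenvectorUnitary_mul_sub_mul, frobenius_norm_sq_eq_sum]
  simp only [sub_apply, diagonal_mul, mul_diagonal]
  exact Finset.sum_congr rfl fun i _ => Finset.sum_congr rfl fun j _ => by ring

theorem abs_sum_sub_sum_eigenvalues_le (hA : A.IsHermitian) (hB : B.IsHermitian)
    {φ : ℝ → ℝ} {s : Set ℝ} {L : ℝ} (hL : 0 ≤ L)
    (hφ : ∀ x ∈ s, ∀ y ∈ s, |φ x - φ y| ≤ L * |x - y|)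
    (hAs : ∀ i, hA.eigenvalues i ∈ s) (hBs : ∀ i, hB.eigenvalues i ∈ s) :
    |∑ i, φ (hA.eigenvalues i) - ∑ i, φ (hB.eigenvalues i)| ≤
      L * √(Fintype.card n) * ‖A - B‖ := by
  have h := abs_sum_sub_sum_le_of_mem_doublyStochastic
    (map_sq_mem_doublyStochastic (eigenvectorOverlap hA hB).2) hL
    (fun i j => hφ _ (hAs i) _ (hBs j))
  simp only [map_apply] at h
  rwa [sum_eigenvectorOverlap_sq_mul_sub_sq, Real.sqrt_sq (norm_nonneg _)] at h

end IsHermitian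

end Matrix

lemma frobNorm_eq_norm {M N : ℕ} (X : Matrix (Fin M) (Fin N) ℝ) : frobNorm X = ‖X‖ := by
  rw [frobNorm, ← frobenius_norm_sq_eq_trace, Real.sqrt_sq (norm_nonneg _)]

lemma Ctil_posSemidef (ξ : Matrix (Fin 3) (Fin 3) ℝ) : (Ctil ξ).PosSemidef := by
  have h := posSemidef_conjTranspose_mul_self (1 + ξ)
  rwa [conjTranspose_eq_transpose_of_trivial] at h

lemma norm_Ctil_sub_Ctil_le (ξ η : Matrix (Fin 3) (Fin 3) ℝ) :
    ‖Ctil ξ - Ctil η‖ ≤ (‖1 + ξ‖ + ‖1 + η‖) * ‖ξ - η‖ := by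
  have h := frobenius_norm_transpose_mul_self_sub_le (1 + ξ) (1 + η)
  rwa [add_sub_add_left_eq_sub] at h

lemma sum_eigenvalues_Ctil (ξ : Matrix (Fin 3) (Fin 3) ℝ) :
    ∑ i, (Ctil_isHermitian ξ).eigenvalues i = ‖1 + ξ‖ ^ 2 := by
  rw [frobenius_norm_sq_eq_trace, ← Ctil, (Ctil_isHermitian ξ).trace_eq_sum_eigenvalues]
  simp

lemma Gp_nonneg (p : ℝ) (ξ : Matrix (Fin 3) (Fin 3) ℝ) : 0 ≤ Gp p ξ :=
  le_max_right _ _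

lemma eigenvalues_Ctil_rpow_le (p : ℝ) (ξ : Matrix (Fin 3) (Fin 3) ℝ) (i : Fin 3) :
    (Ctil_isHermitian ξ).eigenvalues i ^ (p / 2) ≤ Gp p ξ + 3 := by
  have hsingle := Finset.single_le_sum (f := fun j => (Ctil_isHermitian ξ).eigenvalues j ^ (p / 2))
    (fun j _ => Real.rpow_nonneg ((Ctil_posSemidef ξ).eigenvalues_nonneg j) _)
    (Finset.mem_univ i)
  have hmax := le_max_left ((∑ j, (Ctil_isHermitian ξ).eigenvalues j ^ (p / 2)) - 3) 0
  rw [Gp]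
  linarith

lemma eigenvalues_Ctil_le {p T : ℝ} (hp : 0 < p) {ξ : Matrix (Fin 3) (Fin 3) ℝ}
    (hT : Gp p ξ + 3 ≤ T) (i : Fin 3) : (Ctil_isHermitian ξ).eigenvalues i ≤ T ^ (p / 2)⁻¹ :=
  (Real.le_rpow_inv_iff_of_pos ((Ctil_posSemidef ξ).eigenvalues_nonneg i)
    ((Gp_nonneg p ξ).trans (by linarith)) (by positivity)).mpr
    ((eigenvalues_Ctil_rpow_le p ξ i).trans hT)

theorem abs_Gp_sub_Gp_le {p M : ℝ} (hp : 2 ≤ p) {ξ η : Matrix (Fin 3) (Fin 3) ℝ}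
    (hξ : ∀ i, (Ctil_isHermitian ξ).eigenvalues i ≤ M)
    (hη : ∀ i, (Ctil_isHermitian η).eigenvalues i ≤ M) :
    |Gp p ξ - Gp p η| ≤ 3 * p * M ^ ((p - 1) / 2) * ‖ξ - η‖ := by
  have hM : 0 ≤ M := ((Ctil_posSemidef ξ).eigenvalues_nonneg 0).trans (hξ 0)
  have hq : 1 ≤ p / 2 := by linarith
  have hΦ := (Ctil_isHermitian ξ).abs_sum_sub_sum_eigenvalues_le (Ctil_isHermitian η)
    (φ := (· ^ (p / 2))) (by positivity)
    (fun x hx y hy => Real.abs_rpow_sub_rpow_le_of_mem_Icc hq hx hy)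
    (fun i => ⟨(Ctil_posSemidef ξ).eigenvalues_nonneg i, hξ i⟩)
    (fun i => ⟨(Ctil_posSemidef η).eigenvalues_nonneg i, hη i⟩)
  have hnorm (ζ : Matrix (Fin 3) (Fin 3) ℝ) (hζ : ∀ i, (Ctil_isHermitian ζ).eigenvalues i ≤ M) :
      ‖1 + ζ‖ ≤ √3 * √M := by
    rw [← Real.sqrt_mul zero_le_three, Real.le_sqrt (norm_nonneg _) (by positivity),
      ← sum_eigenvalues_Ctil]
    simpa using Finset.sum_le_sum fun i (_ : i ∈ Finset.univ) => hζ i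
  have hpow : M ^ (p / 2 - 1) * √M = M ^ ((p - 1) / 2) := by
    rw [Real.sqrt_eq_rpow, ← Real.rpow_add' hM (by linarith)]
    ring_nf
  calc |Gp p ξ - Gp p η|
      ≤ |∑ i, (Ctil_isHermitian ξ).eigenvalues i ^ (p / 2) -
          ∑ i, (Ctil_isHermitian η).eigenvalues i ^ (p / 2)| := by
        rw [Gp, Gp]
        exact (abs_max_sub_max_le_abs _ _ 0).trans_eq (by rw [sub_sub_sub_cancel_right])
    _ ≤ p / 2 * M ^ (p / 2 - 1) * √3 * ‖Ctil ξ - Ctil η‖ := by simpa using hΦ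
    _ ≤ p / 2 * M ^ (p / 2 - 1) * √3 * ((√3 * √M + √3 * √M) * ‖ξ - η‖) := by
        grw [norm_Ctil_sub_Ctil_le, hnorm ξ hξ, hnorm η hη]
    _ = 3 * p * (M ^ (p / 2 - 1) * √M) * ‖ξ - η‖ := by
        linear_combination p * M ^ (p / 2 - 1) * √M * ‖ξ - η‖ * Real.mul_self_sqrt zero_le_three
    _ = 3 * p * M ^ ((p - 1) / 2) * ‖ξ - η‖ := by rw [hpow]

/-- The verification, in Example 3, that the Ogden-type density satisfies the
Lipschitz condition (2.5) with `h_n = a_n`. -/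
theorem ogden_lipschitz_condition (p : ℝ) (hp : 2 ≤ p) :
    ∃ C : ℝ, 0 < C ∧ ∀ ξ η : Matrix (Fin 3) (Fin 3) ℝ,
      |Gp p ξ - Gp p η| ≤
        C * (1 + Gp p ξ + Gp p η) ^ ((p - 1) / p) * frobNorm (ξ - η) := by
  refine ⟨9 * p, by positivity, fun ξ η => ?_⟩
  set T := 1 + Gp p ξ + Gp p η with hT_def
  have hGξ := Gp_nonneg p ξ
  have hGη := Gp_nonneg p η
  have hT : 0 ≤ T := by linarith
  have hTξ : Gp p ξ + 3 ≤ 3 * T := by linarith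
  have hTη : Gp p η + 3 ≤ 3 * T := by linarith
  have hexp : ((3 * T) ^ (p / 2)⁻¹) ^ ((p - 1) / 2) = (3 * T) ^ ((p - 1) / p) := by
    rw [← Real.rpow_mul (by positivity)]
    congr 1
    field_simp
  have hthree : (3 : ℝ) ^ ((p - 1) / p) ≤ 3 := by
    simpa using Real.rpow_le_rpow_of_exponent_le (by norm_num : (1 : ℝ) ≤ 3)
      (div_le_one_of_le₀ (by linarith) (by linarith) : (p - 1) / p ≤ 1)
  calc |Gp p ξ - Gp p η|
      ≤ 3 * p * ((3 * T) ^ (p / 2)⁻¹) ^ ((p - 1) / 2) * ‖ξ - η‖ :=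
        abs_Gp_sub_Gp_le hp (eigenvalues_Ctil_le (by linarith) hTξ)
          (eigenvalues_Ctil_le (by linarith) hTη)
    _ ≤ 3 * p * (3 * T ^ ((p - 1) / p)) * ‖ξ - η‖ := by
        rw [hexp, Real.mul_rpow zero_le_three hT]
        gcongr
    _ = 9 * p * T ^ ((p - 1) / p) * frobNorm (ξ - η) := by
        rw [frobNorm_eq_norm]
        ring
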